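/- An allocation rule on a fixed finite agent set satisfies WRP-π, EF1, non-wastefulness, and resource monotonicity if and only if it equals the draft rule φ^π associated with priority π. -/

import Mathlib

open Finset

noncomputable section

abbrev Obj := ℕ

def PD (r : Obj → Obj → Prop) (S T : Finset Obj) : Prop :=
  ∃ μ : {x // x ∈ T} → {x // x ∈ S}, Function.Injective μ ∧ ∀ x, r (μ x).1 x.1

def StrictPD (r : Obj → Obj → Prop) (S T : Finset Obj) : Prop :=
  PD r S T ∧ ¬ PD r T S

def LinProfile {n : ℕ} (pref : Fin n → Obj → Obj → Prop) : Prop :=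
  ∀ i, IsLinearOrder Obj (pref i)

def IsAlloc {n : ℕ} (A : Fin n → Finset Obj) (X : Finset Obj) : Prop :=
  (∀ i, A i ⊆ X) ∧ ∀ i j, i ≠ j → Disjoint (A i) (A j)

open Classical in
def topOf (r : Obj → Obj → Prop) (X : Finset Obj) : Obj :=
  if h : ∃ m ∈ X, ∀ x ∈ X, r m x then h.choose else 0

def remaining {n : ℕ} (pref : Fin n → Obj → Obj → Prop) (f : ℕ → Fin n)
    (X : Finset Obj) : ℕ → Finset Obj
  | 0 => X
  | k + 1 => (remaining pref f X k).erase (topOf (pref (f k)) (remaining pref f X k))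

def draft {n : ℕ} (pref : Fin n → Obj → Obj → Prop) (f : ℕ → Fin n)
    (X : Finset Obj) (i : Fin n) : Finset Obj :=
  ((Finset.range X.card).filter (fun k => f k = i)).image
    (fun k => topOf (pref (f k)) (remaining pref f X k))

def roundRobin {n : ℕ} (hn : 0 < n) (π : Equiv.Perm (Fin n)) (k : ℕ) : Fin n :=
  π.symm ⟨k % n, Nat.mod_lt k hn⟩

def draftPi {n : ℕ} (hn : 0 < n) (pref : Fin n → Obj → Obj → Prop)
    (π : Equiv.Perm (Fin n)) (X : Finset Obj) (i : Fin n) : Finset Obj :=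
  draft pref (roundRobin hn π) X i


/-!
The draft rule satisfies the four axioms; for EF1, agent `j` drafts `(π i - π j) mod n` steps
before each turn of `i` except possibly the first one, so it picks something at least as good.
Conversely, WRP-π and EF1 force the
bundle sizes of any such rule to be the round-robin sizes `⌊|X|/n⌋ + [π i < |X| mod n]`. One then
shows by induction on `|X|` that the `k`-th drafted object goes to the agent `i` drafting at step
`k`. Remove the object drafted last; on the smaller problem the rule is the draft, whose first
`k + 1` picks for `i` are the same as before, and resource monotonicity embeds them into `i`'s
bundle, each one sent to an object `i` likes at least as much as the `k`-th pick. Apart from that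
pick itself, the only such objects are the earlier picks of `i`, one too few, so the `k`-th pick
is in `i`'s bundle. The last pick is forced by non-wastefulness and the bundle sizes.
-/

section TopOf

variable {r : Obj → Obj → Prop} [IsLinearOrder Obj r] {S S' : Finset Obj}

theorem exists_mem_forall_rel (hS : S.Nonempty) : ∃ m ∈ S, ∀ x ∈ S, r m x := by
  induction hS using Finset.Nonempty.cons_induction with
  | singleton a => exact ⟨a, mem_singleton_self a, fun x hx => mem_singleton.1 hx ▸ refl_of r a⟩
  | cons a s _ _ ih =>
    obtain ⟨m, hm, hmin⟩ := ih
    rcases total_of r a m with ham | hma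
    · exact ⟨a, mem_cons_self a s, fun x hx =>
        (mem_cons.1 hx).elim (· ▸ refl_of r a) (trans_of r ham <| hmin x ·)⟩
    · exact ⟨m, mem_cons_of_mem hm, fun x hx => (mem_cons.1 hx).elim (· ▸ hma) (hmin x)⟩

theorem topOf_spec (hS : S.Nonempty) : topOf r S ∈ S ∧ ∀ x ∈ S, r (topOf r S) x := by
  have h := exists_mem_forall_rel (r := r) hS
  rw [topOf, dif_pos h]
  exact h.choose_spec

theorem topOf_mem (hS : S.Nonempty) : topOf r S ∈ S := (topOf_spec hS).1

theorem topOf_rel {x : Obj} (hx : x ∈ S) : r (topOf r S) x := (topOf_spec ⟨x, hx⟩).2 x hx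

theorem topOf_eq_of_subset (hS : S' ⊆ S) (h : topOf r S ∈ S') : topOf r S' = topOf r S :=
  antisymm (topOf_rel h) (topOf_rel (hS (topOf_mem ⟨_, h⟩)))

end TopOf

section PairwiseDominance

variable {r : Obj → Obj → Prop} {S S' T T' : Finset Obj}

theorem PD_of_injOn (σ : Obj → Obj) (hmaps : Set.MapsTo σ T S) (hinj : Set.InjOn σ T)
    (hrel : ∀ x ∈ T, r (σ x) x) : PD r S T :=
  ⟨fun x => ⟨σ x, hmaps x.2⟩, fun x y h => Subtype.ext (hinj x.2 y.2 (congrArg Subtype.val h)),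
    fun x => hrel x x.2⟩

theorem PD_image_image {K L : Finset ℕ} {v w : ℕ → Obj} {g : ℕ → ℕ} (hv : Set.InjOn v L)
    (hg : Set.InjOn g K) (hgKL : Set.MapsTo g K L) (hrel : ∀ k ∈ K, r (v (g k)) (w k)) :
    PD r (L.image v) (K.image w) := by
  classical
  choose! κ hκK hκw using fun x (hx : x ∈ K.image w) => mem_image.1 hx
  refine PD_of_injOn (fun x => v (g (κ x))) (fun x hx => mem_image_of_mem v (hgKL (hκK x hx)))
    (fun x hx y hy hxy => ?_) fun x hx => by simpa only [hκw x hx] using hrel _ (hκK x hx)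
  rw [← hκw x hx, ← hκw y hy,
    hg (hκK x hx) (hκK y hy) (hv (hgKL (hκK x hx)) (hgKL (hκK y hy)) hxy)]

theorem PD.mono_right (h : PD r S T) (hT : T' ⊆ T) : PD r S T' :=
  let ⟨μ, hμ, hrel⟩ := h
  ⟨fun x => μ ⟨x, hT x.2⟩, fun _ _ hxy => Subtype.ext (by simpa using hμ hxy),
    fun x => hrel ⟨x, hT x.2⟩⟩

theorem PD.card_le_card_of_rel_mem (h : PD r S T)
    (hS' : ∀ x ∈ T, ∀ y ∈ S, r y x → y ∈ S') : T.card ≤ S'.card := by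
  obtain ⟨μ, hμ, hrel⟩ := h
  let ν : {x // x ∈ T} → {x // x ∈ S'} := fun x => ⟨μ x, hS' x x.2 _ (μ x).2 (hrel x)⟩
  simpa using Fintype.card_le_of_injective ν
    fun x y hxy => hμ (Subtype.ext (by simpa [ν] using hxy))

theorem PD.card_le_card (h : PD r S T) : T.card ≤ S.card :=
  h.card_le_card_of_rel_mem fun _ _ _ hy _ => hy

theorem mem_of_PD_insert [IsPreorder Obj r] {B : Finset Obj} {p : Obj} (hp : p ∉ B)
    (h : PD r S (insert p B)) (hB : ∀ x ∈ B, r x p) (hS : ∀ z ∈ S, r z p → z ≠ p → z ∈ B) :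
    p ∈ S := by
  by_contra hpS
  have hle := h.card_le_card_of_rel_mem (S' := B) fun x hx y hy hyx => by
    have hxp : r x p := (mem_insert.1 hx).elim (· ▸ refl_of r p) (hB x)
    exact hS y hy (trans_of r hyx hxp) (ne_of_mem_of_not_mem hy hpS)
  rw [card_insert_of_notMem hp] at hle
  omega

end PairwiseDominance

theorem IsAlloc.sum_card {n : ℕ} {A : Fin n → Finset Obj} {X : Finset Obj} (hA : IsAlloc A X)
    (hcover : univ.biUnion A = X) : ∑ i, (A i).card = X.card := by
  rw [← hcover, card_biUnion fun i _ j _ hij => hA.2 i j hij]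

def pick {n : ℕ} (pref : Fin n → Obj → Obj → Prop) (f : ℕ → Fin n) (X : Finset Obj) (k : ℕ) :
    Obj :=
  topOf (pref (f k)) (remaining pref f X k)

def turns {n : ℕ} (f : ℕ → Fin n) (i : Fin n) (m : ℕ) : Finset ℕ :=
  (range m).filter (f · = i)

section Draft

variable {n : ℕ} {pref : Fin n → Obj → Obj → Prop} {f : ℕ → Fin n} {X X' : Finset Obj}
  {i j : Fin n} {k l m : ℕ}

theorem mem_turns : k ∈ turns f i m ↔ k < m ∧ f k = i := by
  simp [turns]

theorem turns_mono (h : l ≤ m) : turns f i l ⊆ turns f i m :=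
  filter_subset_filter _ (range_subset_range.2 h)

theorem remaining_antitone : Antitone (remaining pref f X) :=
  antitone_nat_of_succ_le fun _ => erase_subset _ _

theorem remaining_subset : remaining pref f X k ⊆ X :=
  remaining_antitone k.zero_le

theorem draft_eq_image : draft pref f X i = (turns f i X.card).image (pick pref f X) := rfl

theorem mem_draft_iff {x : Obj} :
    x ∈ draft pref f X i ↔ ∃ k < X.card, f k = i ∧ pick pref f X k = x := by
  simp [draft_eq_image, mem_turns, and_assoc]

theorem pick_mem_draft (hk : k < X.card) : pick pref f X k ∈ draft pref f X (f k) :=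
  mem_draft_iff.2 ⟨k, hk, rfl, rfl⟩

theorem mem_remaining_or_exists_pick {x : Obj} (hx : x ∈ X) :
    ∀ k, x ∈ remaining pref f X k ∨ ∃ l < k, pick pref f X l = x
  | 0 => .inl hx
  | k + 1 => by
    rcases mem_remaining_or_exists_pick hx k with h | ⟨l, hl, rfl⟩
    · by_cases hxk : pick pref f X k = x
      · exact .inr ⟨k, k.lt_succ_self, hxk⟩
      · exact .inl (mem_erase.2 ⟨Ne.symm hxk, h⟩)
    · exact .inr ⟨l, hl.trans k.lt_succ_self, rfl⟩

variable (hpref : LinProfile pref)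
include hpref

theorem card_remaining (hk : k ≤ X.card) : (remaining pref f X k).card = X.card - k := by
  induction k with
  | zero => rfl
  | succ k ih =>
    have hne : (remaining pref f X k).Nonempty := by
      rw [← card_pos, ih (by omega)]; omega
    have := hpref (f k)
    rw [remaining, card_erase_of_mem (topOf_mem hne), ih (by omega)]
    omega

theorem pick_mem_remaining (hk : k < X.card) : pick pref f X k ∈ remaining pref f X k := by
  have := hpref (f k)
  exact topOf_mem (card_pos.1 (by rw [card_remaining hpref hk.le]; omega))

theorem pick_mem (hk : k < X.card) : pick pref f X k ∈ X :=
  remaining_subset (pick_mem_remaining hpref hk)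

theorem pick_rel {x : Obj} (hx : x ∈ remaining pref f X k) : pref (f k) (pick pref f X k) x := by
  have := hpref (f k)
  exact topOf_rel hx

theorem pick_ne_of_lt (hkl : k < l) (hl : l < X.card) : pick pref f X k ≠ pick pref f X l :=
  fun h => notMem_erase (pick pref f X k) _
    (h ▸ remaining_antitone hkl (pick_mem_remaining hpref hl))

theorem pick_injOn : Set.InjOn (pick pref f X) (range X.card) := by
  intro k hk l hl h
  simp only [coe_range, Set.mem_Iio] at hk hl
  rcases lt_trichotomy k l with hkl | rfl | hlk
  · exact absurd h (pick_ne_of_lt hpref hkl hl)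
  · rfl
  · exact absurd h.symm (pick_ne_of_lt hpref hlk hk)

theorem pick_injOn_turns : Set.InjOn (pick pref f X) (turns f i X.card) :=
  (pick_injOn hpref).mono (coe_subset.2 (filter_subset _ _))

theorem card_draft : (draft pref f X i).card = (turns f i X.card).card :=
  card_image_of_injOn (pick_injOn_turns hpref)

theorem isAlloc_draft : IsAlloc (draft pref f X) X := by
  refine ⟨fun i x hx => ?_, fun i j hij => disjoint_left.2 fun x hxi hxj => hij ?_⟩
  · obtain ⟨k, hk, -, rfl⟩ := mem_draft_iff.1 hx
    exact pick_mem hpref hk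
  · obtain ⟨k, hk, rfl, rfl⟩ := mem_draft_iff.1 hxi
    obtain ⟨l, hl, rfl, hkl⟩ := mem_draft_iff.1 hxj
    rw [pick_injOn hpref (mem_range.2 hl) (mem_range.2 hk) hkl]

theorem biUnion_draft : univ.biUnion (draft pref f X) = X := by
  refine Subset.antisymm (biUnion_subset.2 fun i _ => (isAlloc_draft hpref).1 i) fun x hx => ?_
  rcases mem_remaining_or_exists_pick (pref := pref) (f := f) hx X.card with h | ⟨l, hl, rfl⟩
  · have hempty : remaining pref f X X.card = ∅ :=
      card_eq_zero.1 (by rw [card_remaining hpref le_rfl, Nat.sub_self])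
    exact absurd (hempty ▸ h) (notMem_empty x)
  · exact mem_biUnion.2 ⟨f l, mem_univ _, pick_mem_draft hl⟩

theorem eq_draft_of_forall_pick_mem {A : Fin n → Finset Obj} (hA : IsAlloc A X)
    (h : ∀ k < X.card, pick pref f X k ∈ A (f k)) : A = draft pref f X := by
  funext i
  ext x
  refine ⟨fun hx => ?_, fun hx => ?_⟩
  · obtain ⟨j, -, hxj⟩ := mem_biUnion.1 ((biUnion_draft hpref).symm ▸ hA.1 i hx :
      x ∈ univ.biUnion (draft pref f X))
    obtain ⟨k, hk, rfl, rfl⟩ := mem_draft_iff.1 hxj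
    by_contra hne
    exact disjoint_left.1 (hA.2 i (f k) fun h' => hne (h' ▸ hxj)) hx (h k hk)
  · obtain ⟨k, hk, rfl, rfl⟩ := mem_draft_iff.1 hx
    exact h k hk

theorem remaining_subset_remaining (hXX : X' ⊆ X) :
    ∀ k, remaining pref f X' k ⊆ remaining pref f X k
  | 0 => hXX
  | k + 1 => fun x hx => by
    obtain ⟨hxp, hx⟩ := mem_erase.1 hx
    refine mem_erase.2 ⟨fun hxe => hxp ?_, remaining_subset_remaining hXX k hx⟩
    have := hpref (f k)
    subst hxe
    exact (topOf_eq_of_subset (remaining_subset_remaining hXX k) hx).symm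

theorem pick_rel_pick_of_subset (hXX : X' ⊆ X) (hk : k < X'.card) :
    pref (f k) (pick pref f X k) (pick pref f X' k) :=
  pick_rel hpref (remaining_subset_remaining hpref hXX k (pick_mem_remaining hpref hk))

theorem pick_eq_of_remaining_eq_erase {y : Obj}
    (h : remaining pref f X' k = (remaining pref f X k).erase y)
    (hy : y ∈ remaining pref f X (k + 1)) : pick pref f X' k = pick pref f X k := by
  obtain ⟨hyk, hy⟩ := mem_erase.1 hy
  have := hpref (f k)
  rw [pick, h]
  exact topOf_eq_of_subset (erase_subset _ _) (mem_erase.2 ⟨Ne.symm hyk, topOf_mem ⟨y, hy⟩⟩)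

theorem remaining_erase {y : Obj} (hy : y ∈ remaining pref f X m) :
    ∀ k ≤ m, remaining pref f (X.erase y) k = (remaining pref f X k).erase y
  | 0, _ => rfl
  | k + 1, hk => by
    have ih := remaining_erase hy k (by omega)
    rw [remaining, remaining, ← pick, ← pick, ih,
      pick_eq_of_remaining_eq_erase hpref ih (remaining_antitone hk hy), erase_right_comm]

theorem pick_erase {y : Obj} (hy : y ∈ remaining pref f X m) (hk : k < m) :
    pick pref f (X.erase y) k = pick pref f X k :=
  pick_eq_of_remaining_eq_erase hpref (remaining_erase hpref hy k hk.le) (remaining_antitone hk hy)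

theorem PD_draft_of_subset (hXX : X' ⊆ X) (i : Fin n) :
    PD (pref i) (draft pref f X i) (draft pref f X' i) :=
  PD_image_image (g := id) (pick_injOn_turns hpref) (Set.injOn_id _)
    (fun _ hk => turns_mono (card_le_card hXX) hk) fun _ hk =>
      (mem_turns.1 hk).2 ▸ pick_rel_pick_of_subset hpref hXX (mem_turns.1 hk).1

theorem PD_draft_sdiff {d : ℕ} (hshift : ∀ k, f k = i → d ≤ k → f (k - d) = j) :
    PD (pref j) (draft pref f X j) (draft pref f X i \ (turns f i d).image (pick pref f X)) := by
  refine PD.mono_right (T := ((turns f i X.card).filter (d ≤ ·)).image (pick pref f X))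
    (PD_image_image (g := (· - d)) (pick_injOn_turns hpref) ?_ ?_ ?_) ?_
  · intro k hk l hl (hkl : k - d = l - d)
    have := (mem_filter.1 hk).2
    have := (mem_filter.1 hl).2
    omega
  · intro k hk
    obtain ⟨hk, hdk⟩ := mem_filter.1 hk
    obtain ⟨hkX, hfk⟩ := mem_turns.1 hk
    exact mem_turns.2 ⟨(Nat.sub_le k d).trans_lt hkX, hshift k hfk hdk⟩
  · intro k hk
    simp only [mem_filter, mem_turns] at hk
    rw [← hshift k hk.1.2 hk.2]
    exact pick_rel hpref (remaining_antitone (Nat.sub_le k d) (pick_mem_remaining hpref hk.1.1))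
  · intro x hx
    obtain ⟨hx, hxd⟩ := mem_sdiff.1 hx
    obtain ⟨k, hk, rfl, rfl⟩ := mem_draft_iff.1 hx
    refine mem_image_of_mem _ (mem_filter.2 ⟨mem_turns.2 ⟨hk, rfl⟩, ?_⟩)
    by_contra hkd
    exact hxd (mem_image_of_mem _ (mem_turns.2 ⟨by omega, rfl⟩))

theorem pick_mem_of_PD_draft_erase {A : Fin n → Finset Obj} (hA : IsAlloc A X)
    (hk : k + 1 < X.card) (hearlier : ∀ l < k, pick pref f X l ∈ A (f l))
    (hPD : PD (pref (f k)) (A (f k))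
      (draft pref f (X.erase (pick pref f X (X.card - 1))) (f k))) :
    pick pref f X k ∈ A (f k) := by
  have hlast := pick_mem_remaining (f := f) (X := X) hpref (k := X.card - 1) (by omega)
  have hcard : (X.erase (pick pref f X (X.card - 1))).card = X.card - 1 :=
    card_erase_of_mem (remaining_subset hlast)
  have := hpref (f k)
  refine mem_of_PD_insert (B := (turns f (f k) k).image (pick pref f X)) ?_ (hPD.mono_right ?_)
    ?_ ?_
  · simp only [mem_image, mem_turns, not_exists, not_and]
    exact fun l hl => pick_ne_of_lt hpref hl.1 (by omega)
  · refine insert_subset ?_ fun x hx => ?_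
    · rw [← pick_erase hpref hlast (by omega : k < X.card - 1)]
      exact pick_mem_draft (by omega)
    · obtain ⟨l, hl, rfl⟩ := mem_image.1 hx
      obtain ⟨hlk, hfl⟩ := mem_turns.1 hl
      rw [← pick_erase hpref hlast (by omega : l < X.card - 1), ← hfl]
      exact pick_mem_draft (by omega)
  · simp only [mem_image, mem_turns]
    rintro _ ⟨l, ⟨hl, hfl⟩, rfl⟩
    exact hfl ▸ pick_rel hpref (remaining_antitone hl.le (pick_mem_remaining hpref (by omega)))
  · intro z hz hzp hne
    have hzrem : z ∉ remaining pref f X k := fun h => hne (antisymm hzp (pick_rel hpref h))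
    obtain ⟨l, hl, rfl⟩ := (mem_remaining_or_exists_pick (hA.1 _ hz) k).resolve_left hzrem
    refine mem_image_of_mem _ (mem_turns.2 ⟨hl, ?_⟩)
    by_contra hfl
    exact disjoint_left.1 (hA.2 _ _ hfl) (hearlier l hl) hz

theorem pick_mem_of_card_le {A : Fin n → Finset Obj} (hcover : univ.biUnion A = X)
    (hcard : ∀ j, (A j).card ≤ (draft pref f X j).card)
    (hk : k + 1 = X.card) (hearlier : ∀ l < k, pick pref f X l ∈ A (f l)) :
    pick pref f X k ∈ A (f k) := by
  obtain ⟨j, -, hj⟩ := mem_biUnion.1 (by rw [hcover]; exact pick_mem hpref (by omega) :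
    pick pref f X k ∈ univ.biUnion A)
  obtain rfl | hjk := eq_or_ne j (f k)
  · exact hj
  have hnot : pick pref f X k ∉ draft pref f X j :=
    disjoint_left.1 ((isAlloc_draft hpref).2 _ _ hjk.symm) (pick_mem_draft (by omega))
  have hsub : insert (pick pref f X k) (draft pref f X j) ⊆ A j := by
    refine insert_subset hj fun x hx => ?_
    obtain ⟨l, hl, rfl, rfl⟩ := mem_draft_iff.1 hx
    exact hearlier l (lt_of_le_of_ne (by omega) fun h => hjk (h ▸ rfl))
  have := card_le_card hsub
  rw [card_insert_of_notMem hnot] at this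
  have := hcard j
  omega

end Draft

theorem Fin.mem_iff_lt_card_of_isLowerSet {n : ℕ} {s : Finset (Fin n)}
    (hs : IsLowerSet (s : Set (Fin n))) (b : Fin n) : b ∈ s ↔ (b : ℕ) < s.card := by
  constructor
  · intro hb
    have := card_le_card fun c hc => hs (mem_Iic.1 hc) (mem_coe.2 hb)
    rw [Fin.card_Iic] at this
    omega
  · intro hb
    by_contra hbs
    have := card_le_card (t := Iio b) fun c hc =>
      mem_Iio.2 (lt_of_not_ge fun hbc => hbs (hs hbc (mem_coe.2 hc)))
    rw [Fin.card_Iio] at this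
    omega

theorem Fin.eq_sum_div_add_ite_of_antitone {n : ℕ} {u : Fin n → ℕ} (hu : Antitone u)
    (hbal : ∀ a b, u a ≤ u b + 1) (a : Fin n) :
    u a = (∑ b, u b) / n + if (a : ℕ) < (∑ b, u b) % n then 1 else 0 := by
  obtain ⟨n, rfl⟩ := Nat.exists_eq_add_one_of_ne_zero a.pos.ne'
  classical
  set q := u (Fin.last n)
  have hq : ∀ b, u b = q + if q < u b then 1 else 0 := fun b => by
    have := hu (Fin.le_last b)
    have := hbal b (Fin.last n)
    split_ifs <;> omega
  set s := univ.filter fun b => q < u b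
  have hlow : IsLowerSet (s : Set (Fin (n + 1))) := fun c d hdc hc => by
    simp only [s, coe_filter, mem_univ, true_and] at hc ⊢
    exact hc.trans_le (hu hdc)
  have hs : ∀ b, q < u b ↔ (b : ℕ) < s.card := fun b => by
    rw [← Fin.mem_iff_lt_card_of_isLowerSet hlow]
    simp [s]
  have hsn : s.card < n + 1 := by
    have := (hs (Fin.last n)).not.1 (lt_irrefl q)
    simp only [Fin.val_last, not_lt] at this
    omega
  have hsum : ∑ b, u b = s.card + (n + 1) * q := by
    calc ∑ b, u b = ∑ b, (q + if q < u b then 1 else 0) := sum_congr rfl fun b _ => hq b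
      _ = s.card + (n + 1) * q := by
        rw [sum_add_distrib, sum_boole]
        simp [s, add_comm]
  obtain ⟨hdiv, hmod⟩ := (Nat.div_mod_unique n.succ_pos).2 ⟨hsum.symm, hsn⟩
  rw [hdiv, hmod]
  simpa only [hs] using hq a

section RoundRobin

variable {n : ℕ} (hn : 0 < n) (π : Equiv.Perm (Fin n)) {i j : Fin n} {k m : ℕ}

theorem roundRobin_eq_iff : roundRobin hn π k = i ↔ k % n = π i := by
  rw [roundRobin, Equiv.symm_apply_eq, Fin.ext_iff]

theorem card_turns_roundRobin (i : Fin n) (m : ℕ) :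
    (turns (roundRobin hn π) i m).card = m / n + if (π i : ℕ) < m % n then 1 else 0 := by
  have h : turns (roundRobin hn π) i m = (range m).filter (· ≡ (π i : ℕ) [MOD n]) := by
    ext k
    simp [turns, roundRobin_eq_iff, Nat.ModEq, Nat.mod_eq_of_lt (π i).is_lt]
  rw [h, ← Nat.count_eq_card_filter_range, Nat.count_modEq_card _ hn,
    Nat.mod_eq_of_lt (π i).is_lt]

theorem turns_roundRobin_subset (hm : m ≤ n) : turns (roundRobin hn π) i m ⊆ {(π i : ℕ)} := by
  intro k hk
  obtain ⟨hkm, hk⟩ := mem_turns.1 hk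
  rw [roundRobin_eq_iff, Nat.mod_eq_of_lt (by omega)] at hk
  exact mem_singleton.2 hk

theorem roundRobin_sub (hk : roundRobin hn π k = i) (hd : (π i + n - π j) % n ≤ k) :
    roundRobin hn π (k - (π i + n - π j) % n) = j := by
  rw [roundRobin_eq_iff] at hk ⊢
  have h : k - (π i + n - π j) % n + (π i + n - π j) % n
      ≡ π j + (π i + n - π j) % n [MOD n] := by
    rw [Nat.sub_add_cancel hd]
    calc k ≡ π i + n [MOD n] := by
          rw [Nat.ModEq, hk, Nat.add_mod_right, Nat.mod_eq_of_lt (π i).is_lt]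
      _ = π j + (π i + n - π j) := by omega
      _ ≡ π j + (π i + n - π j) % n [MOD n] := (Nat.mod_modEq _ _).symm.add_left _
  exact Eq.trans (Nat.ModEq.add_right_cancel' _ h) (Nat.mod_eq_of_lt (π j).is_lt)

variable {pref : Fin n → Obj → Obj → Prop} (hpref : LinProfile pref) {X : Finset Obj}
include hpref

theorem card_draftPi (i : Fin n) :
    (draftPi hn pref π X i).card = X.card / n + if (π i : ℕ) < X.card % n then 1 else 0 := by
  rw [draftPi, card_draft hpref, card_turns_roundRobin]

theorem card_draftPi_le_of_lt (h : π i < π j) :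
    (draftPi hn pref π X j).card ≤ (draftPi hn pref π X i).card := by
  have : (π i : ℕ) < π j := h
  rw [card_draftPi hn π hpref, card_draftPi hn π hpref]
  split_ifs <;> omega

theorem exists_PD_draftPi_sdiff (i j : Fin n) :
    ∃ S ⊆ draftPi hn pref π X i, S.card ≤ 1 ∧
      PD (pref j) (draftPi hn pref π X j) (draftPi hn pref π X i \ S) := by
  set T := (turns (roundRobin hn π) i ((π i + n - π j) % n)).image
    (pick pref (roundRobin hn π) X)
  refine ⟨draftPi hn pref π X i ∩ T, inter_subset_left, ?_, ?_⟩
  · calc (draftPi hn pref π X i ∩ T).card ≤ T.card := card_le_card inter_subset_right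
      _ ≤ (turns (roundRobin hn π) i ((π i + n - π j) % n)).card := card_image_le
      _ ≤ 1 := by simpa using card_le_card (turns_roundRobin_subset hn π (Nat.mod_lt _ hn).le)
  · rw [sdiff_inter_self_left]
    exact PD_draft_sdiff hpref fun k hk hd => roundRobin_sub hn π hk hd

end RoundRobin

section Axioms

variable {n : ℕ} (φ : (Fin n → Obj → Obj → Prop) → Finset Obj → Fin n → Finset Obj)

def IsAllocRule : Prop :=
  ∀ pref, LinProfile pref → ∀ X : Finset Obj, X.Nonempty → IsAlloc (φ pref X) X

def IsWRP (π : Equiv.Perm (Fin n)) : Prop :=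
  ∀ pref, LinProfile pref → ∀ X : Finset Obj, X.Nonempty →
    ∀ i j : Fin n, π i < π j → (φ pref X j).card ≤ (φ pref X i).card

def IsEF1 : Prop :=
  ∀ pref, LinProfile pref → ∀ X : Finset Obj, X.Nonempty →
    ∀ i j : Fin n, ∃ S ⊆ φ pref X i, S.card ≤ 1 ∧ PD (pref j) (φ pref X j) (φ pref X i \ S)

def IsNonwasteful : Prop :=
  ∀ pref, LinProfile pref → ∀ X : Finset Obj, X.Nonempty → univ.biUnion (φ pref X) = X

def IsResourceMonotone : Prop :=
  ∀ pref, LinProfile pref → ∀ X X' : Finset Obj, X'.Nonempty → X' ⊆ X →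
    ∀ i, PD (pref i) (φ pref X i) (φ pref X' i)

end Axioms

section Characterization

variable {n : ℕ} {π : Equiv.Perm (Fin n)}
  {φ : (Fin n → Obj → Obj → Prop) → Finset Obj → Fin n → Finset Obj}
  (hφ : IsAllocRule φ) {pref : Fin n → Obj → Obj → Prop} (hpref : LinProfile pref)
include hφ hpref

theorem card_eq_of_isWRP_of_isEF1 (hW : IsWRP φ π) (hE : IsEF1 φ) (hN : IsNonwasteful φ)
    {X : Finset Obj} (hX : X.Nonempty) (i : Fin n) :
    (φ pref X i).card = X.card / n + if (π i : ℕ) < X.card % n then 1 else 0 := by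
  have hsum : ∑ a, (φ pref X (π.symm a)).card = X.card := by
    rw [Equiv.sum_comp π.symm fun j => (φ pref X j).card]
    exact (hφ pref hpref X hX).sum_card (hN pref hpref X hX)
  have hanti : Antitone fun a => (φ pref X (π.symm a)).card := by
    intro a b hab
    rcases hab.lt_or_eq with hlt | rfl
    · exact hW pref hpref X hX _ _ (by simpa using hlt)
    · rfl
  have hbal : ∀ a b, (φ pref X (π.symm a)).card ≤ (φ pref X (π.symm b)).card + 1 := by
    intro a b
    obtain ⟨S, hS, hS1, hPD⟩ := hE pref hpref X hX (π.symm a) (π.symm b)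
    have := hPD.card_le_card
    have := card_sdiff_of_subset hS
    omega
  simpa [hsum] using Fin.eq_sum_div_add_ite_of_antitone hanti hbal (π i)

theorem pick_mem_of_forall_ssubset (hn : 0 < n) (hW : IsWRP φ π) (hE : IsEF1 φ)
    (hN : IsNonwasteful φ) (hR : IsResourceMonotone φ) {X : Finset Obj}
    (IH : ∀ X' ⊂ X, X'.Nonempty → φ pref X' = draftPi hn pref π X') (hX : X.Nonempty) :
    ∀ k < X.card, pick pref (roundRobin hn π) X k ∈ φ pref X (roundRobin hn π k) := by
  intro k
  induction k using Nat.strong_induction_on with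
  | _ k ihk =>
    intro hk
    have hearlier : ∀ l < k, pick pref (roundRobin hn π) X l ∈ φ pref X (roundRobin hn π l) :=
      fun l hl => ihk l hl (hl.trans hk)
    rcases (by omega : k + 1 < X.card ∨ k + 1 = X.card) with hlt | hlast
    · have hmem : pick pref (roundRobin hn π) X (X.card - 1) ∈ X := pick_mem hpref (by omega)
      set X' := X.erase (pick pref (roundRobin hn π) X (X.card - 1))
      have hX' : X' ⊂ X := erase_ssubset hmem
      have hX'ne : X'.Nonempty := by
        rw [← card_pos, card_erase_of_mem hmem]
        omega
      refine pick_mem_of_PD_draft_erase hpref (hφ pref hpref X hX) hlt hearlier ?_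
      have := hR pref hpref X X' hX'ne hX'.subset (roundRobin hn π k)
      rw [IH X' hX' hX'ne] at this
      exact this
    · refine pick_mem_of_card_le hpref (hN pref hpref X hX) (fun j => ?_) hlast hearlier
      rw [card_eq_of_isWRP_of_isEF1 hφ hpref hW hE hN hX, ← card_draftPi hn π hpref]
      rfl

theorem eq_draftPi_of_axioms (hn : 0 < n) (hW : IsWRP φ π) (hE : IsEF1 φ) (hN : IsNonwasteful φ)
    (hR : IsResourceMonotone φ) :
    ∀ X : Finset Obj, X.Nonempty → φ pref X = draftPi hn pref π X := by
  intro X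
  induction X using Finset.strongInduction with
  | H X IH =>
    exact fun hX => eq_draft_of_forall_pick_mem hpref (hφ pref hpref X hX)
      (pick_mem_of_forall_ssubset hφ hpref hn hW hE hN hR IH hX)

end Characterization

theorem draft_characterization {n : ℕ} (hn : 2 ≤ n) (π : Equiv.Perm (Fin n))
    (φ : (Fin n → Obj → Obj → Prop) → Finset Obj → Fin n → Finset Obj)
    (hvalid : ∀ pref, LinProfile pref → ∀ X : Finset Obj, X.Nonempty →
      IsAlloc (φ pref X) X) :
    ((∀ pref, LinProfile pref → ∀ X : Finset Obj, X.Nonempty →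
        ∀ i j : Fin n, π i < π j → (φ pref X j).card ≤ (φ pref X i).card) ∧
      (∀ pref, LinProfile pref → ∀ X : Finset Obj, X.Nonempty →
        ∀ i j : Fin n, ∃ S ⊆ φ pref X i, S.card ≤ 1 ∧
          PD (pref j) (φ pref X j) (φ pref X i \ S)) ∧
      (∀ pref, LinProfile pref → ∀ X : Finset Obj, X.Nonempty →
        Finset.univ.biUnion (φ pref X) = X) ∧
      (∀ pref, LinProfile pref → ∀ X X' : Finset Obj, X'.Nonempty → X' ⊆ X →
        ∀ i, PD (pref i) (φ pref X i) (φ pref X' i))) ↔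
      (∀ pref, LinProfile pref → ∀ X : Finset Obj, X.Nonempty →
        φ pref X = draftPi (lt_of_lt_of_le Nat.zero_lt_two hn) pref π X) := by
  have hn0 : 0 < n := lt_of_lt_of_le Nat.zero_lt_two hn
  constructor
  · rintro ⟨hW, hE, hN, hR⟩ pref hpref X hX
    exact eq_draftPi_of_axioms hvalid hpref hn0 hW hE hN hR X hX
  · intro h
    refine ⟨fun pref hpref X hX i j hij => ?_, fun pref hpref X hX i j => ?_,
      fun pref hpref X hX => ?_, fun pref hpref X X' hX' hXX' i => ?_⟩
    · rw [h pref hpref X hX]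
      exact card_draftPi_le_of_lt hn0 π hpref hij
    · rw [h pref hpref X hX]
      exact exists_PD_draftPi_sdiff hn0 π hpref i j
    · rw [h pref hpref X hX]
      exact biUnion_draft hpref
    · rw [h pref hpref X (hX'.mono hXX'), h pref hpref X' hX']
      exact PD_draft_of_subset hpref hXX' i
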